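/- Suppose 0 ≤ σ < 1 and fix T > 0. Then ∫_{(0,∞)^p} (1 − e^{−α ψ(2Tw₁,…,2Tw_p)}) ρ(dw) → ∞ as α → ∞. Consequently the expected number of nodes E[V_{α,T}] = α ∫ (1 − e^{−α ψ(2Tw)}) ρ(dw) satisfies E[V_{α,T}] = ω(α) as α → ∞, i.e. α / E[V_{α,T}] → 0. -/

import Mathlib

/-!
For `σ ≥ 0` the Lévy density `w ^ (-1 - σ)` is not integrable at `0`, so `ρ` has infinite total
mass, while (as `σ < 1` and gamma laws have finite means) the coordinates of `ρ` have finite first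
moments. Hence `0 < ψ(t) ≤ ∑ₖ tₖ ∫ vₖ dρ` for `t > 0`, so `Ψ(w) = ψ(2Tw)` is `ρ`-integrable and
positive `ρ`-a.e. Then `1 - exp (-α Ψ)` increases to `1` as `α → ∞`, and by monotone convergence
its `ρ`-integral increases to `ρ(univ) = ∞`.
-/

open MeasureTheory Real Filter
open scoped ENNReal Topology

/-- The Lévy measure of a generalized gamma process: the measure on `(0,∞)` with density
`w ↦ w^(-1-σ) * exp(-τ*w) / Γ(1-σ)` with respect to Lebesgue measure. -/
noncomputable def rho0 (σ τ : ℝ) : Measure ℝ :=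
  ((volume : Measure ℝ).restrict (Set.Ioi 0)).withDensity
    (fun w => ENNReal.ofReal (w ^ (-1 - σ) * Real.exp (-τ * w) / Real.Gamma (1 - σ)))

/-- The Gamma(a,b) probability measure on `(0,∞)`, with density
`x ↦ b^a x^(a−1) e^(−b x) / Γ(a)` with respect to Lebesgue measure. -/
noncomputable def gammaM (a b : ℝ) : Measure ℝ :=
  ((volume : Measure ℝ).restrict (Set.Ioi 0)).withDensity
    (fun x => ENNReal.ofReal (b ^ a * x ^ (a - 1) * Real.exp (-b * x) / Real.Gamma a))

/-- The multivariate Lévy measure `ρ` of the compound CRM with independent gamma scores: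
the pushforward of `ρ₀ ⊗ Gamma(a₁,b₁) ⊗ ⋯ ⊗ Gamma(a_p,b_p)` under
`(w₀, β₁, …, β_p) ↦ (w₀β₁, …, w₀β_p)`. -/
noncomputable def rhoC (σ τ : ℝ) (p : ℕ) (a b : Fin p → ℝ) : Measure (Fin p → ℝ) :=
  Measure.map (fun x : ℝ × (Fin p → ℝ) => fun k => x.1 * x.2 k)
    ((rho0 σ τ).prod (Measure.pi fun k => gammaM (a k) (b k)))

/-- The Laplace exponent `ψ(t) = ∫ (1 − e^{−Σ_k t_k v_k}) ρ(dv)` of the compound CRM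
(a finite quantity, expressed here as a Bochner integral). -/
noncomputable def psi (σ τ : ℝ) (p : ℕ) (a b : Fin p → ℝ) (t : Fin p → ℝ) : ℝ :=
  ∫ v, (1 - Real.exp (-∑ k, t k * v k)) ∂(rhoC σ τ p a b)

/-- `∫ (1 − e^{−α ψ(2Tw₁,…,2Tw_p)}) ρ(dw)`, so that `E[V_{α,T}]` equals `α` times this. -/
noncomputable def nodesIntegral (σ τ : ℝ) (p : ℕ) (a b : Fin p → ℝ) (α T : ℝ) : ℝ :=
  ∫ w, (1 - Real.exp (-α * psi σ τ p a b (fun k => 2 * T * w k))) ∂(rhoC σ τ p a b)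

section OneSubExpNeg

variable {X : Type*} [MeasurableSpace X] {μ : Measure X} {g : X → ℝ}

lemma one_sub_exp_neg_nonneg {y : ℝ} (hy : 0 ≤ y) : 0 ≤ 1 - exp (-y) := by
  linarith [exp_le_one_iff.2 (neg_nonpos.2 hy)]

lemma one_sub_exp_neg_le (y : ℝ) : 1 - exp (-y) ≤ y := by
  linarith [add_one_le_exp (-y)]

lemma monotone_one_sub_exp_neg_mul {y : ℝ} (hy : 0 ≤ y) :
    Monotone fun α : ℝ => 1 - exp (-α * y) := fun α β hαβ => by
  have : -β * y ≤ -α * y := by nlinarith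
  linarith [exp_le_exp.2 this]

lemma tendsto_one_sub_exp_neg_mul {y : ℝ} (hy : 0 < y) :
    Tendsto (fun α : ℝ => 1 - exp (-α * y)) atTop (𝓝 1) := by
  have h : Tendsto (fun α : ℝ => -α * y) atTop atBot := tendsto_neg_atTop_atBot.atBot_mul_const hy
  simpa using tendsto_const_nhds.sub (tendsto_exp_atBot.comp h)

lemma MeasureTheory.Integrable.one_sub_exp_neg (hg : Integrable g μ) (hg0 : 0 ≤ᵐ[μ] g) :
    Integrable (fun x => 1 - exp (-g x)) μ := by
  refine hg.mono' (aestronglyMeasurable_const.sub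
    (continuous_exp.comp_aestronglyMeasurable hg.1.neg)) ?_
  filter_upwards [hg0] with x hx
  rw [norm_of_nonneg (one_sub_exp_neg_nonneg hx)]
  exact one_sub_exp_neg_le _

lemma integral_one_sub_exp_neg_le (hg : Integrable g μ) (hg0 : 0 ≤ᵐ[μ] g) :
    ∫ x, 1 - exp (-g x) ∂μ ≤ ∫ x, g x ∂μ :=
  integral_mono (hg.one_sub_exp_neg hg0) hg fun x => one_sub_exp_neg_le (g x)

lemma integral_one_sub_exp_neg_pos (hμ : μ ≠ 0) (hg : Integrable g μ)
    (hg_pos : ∀ᵐ x ∂μ, 0 < g x) : 0 < ∫ x, 1 - exp (-g x) ∂μ := by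
  have hg0 : 0 ≤ᵐ[μ] g := hg_pos.mono fun x hx => hx.le
  rw [integral_pos_iff_support_of_nonneg_ae (hg0.mono fun x hx => one_sub_exp_neg_nonneg hx)
    (hg.one_sub_exp_neg hg0)]
  have hsupp : ∀ᵐ x ∂μ, x ∈ Function.support fun x => 1 - exp (-g x) := by
    filter_upwards [hg_pos] with x hx
    exact (sub_pos.2 (exp_lt_one_iff.2 (neg_neg_of_pos hx))).ne'
  rw [measure_congr (ae_eq_univ.2 (ae_iff.1 hsupp))]
  exact Measure.measure_univ_pos.2 hμ

theorem tendsto_integral_one_sub_exp_neg_mul_atTop (hμ : μ Set.univ = ∞) (hg : Integrable g μ)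
    (hg_pos : ∀ᵐ x ∂μ, 0 < g x) :
    Tendsto (fun α : ℝ => ∫ x, 1 - exp (-α * g x) ∂μ) atTop atTop := by
  have hg0 : 0 ≤ᵐ[μ] g := hg_pos.mono fun x hx => hx.le
  have hnonneg : ∀ α : ℝ, 0 ≤ α → 0 ≤ᵐ[μ] fun x => 1 - exp (-α * g x) := fun α hα =>
    hg0.mono fun x hx => by
      simpa only [Pi.zero_apply, neg_mul] using one_sub_exp_neg_nonneg (mul_nonneg hα hx)
  have hint : ∀ α : ℝ, 0 ≤ α → Integrable (fun x => 1 - exp (-α * g x)) μ := fun α hα => by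
    simpa only [neg_mul] using
      (hg.const_mul α).one_sub_exp_neg (hg0.mono fun x hx => mul_nonneg hα hx)
  have hmono : ∀ α β : ℝ, 0 ≤ α → α ≤ β →
      ∫ x, 1 - exp (-α * g x) ∂μ ≤ ∫ x, 1 - exp (-β * g x) ∂μ := fun α β hα hαβ =>
    integral_mono_ae (hint α hα) (hint β (hα.trans hαβ))
      (hg0.mono fun x hx => monotone_one_sub_exp_neg_mul hx hαβ)
  have hnat : Tendsto (fun n : ℕ => ∫ x, 1 - exp (-n * g x) ∂μ) atTop atTop := by
    refine ENNReal.tendsto_ofReal_nhds_top.1 ?_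
    have hlin : ∀ n : ℕ, ENNReal.ofReal (∫ x, 1 - exp (-n * g x) ∂μ) =
        ∫⁻ x, ENNReal.ofReal (1 - exp (-n * g x)) ∂μ := fun n =>
      ofReal_integral_eq_lintegral_ofReal (hint n n.cast_nonneg) (hnonneg n n.cast_nonneg)
    simp_rw [hlin, ← hμ, ← lintegral_one, ← ENNReal.ofReal_one]
    refine lintegral_tendsto_of_tendsto_of_monotone
      (fun n => (hint n n.cast_nonneg).1.aemeasurable.ennreal_ofReal) ?_ ?_
    · filter_upwards [hg0] with x hx m n hmn
      exact ENNReal.ofReal_le_ofReal (monotone_one_sub_exp_neg_mul hx (Nat.cast_le.2 hmn))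
    · filter_upwards [hg_pos] with x hx
      exact (ENNReal.continuous_ofReal.tendsto 1).comp
        ((tendsto_one_sub_exp_neg_mul hx).comp tendsto_natCast_atTop_atTop)
  refine tendsto_atTop_mono' _ ?_ (hnat.comp tendsto_nat_floor_atTop)
  filter_upwards [eventually_ge_atTop 0] with α hα
  exact hmono _ _ (Nat.cast_nonneg _) (Nat.floor_le hα)

end OneSubExpNeg

lemma ae_pos_withDensity_restrict_Ioi (f : ℝ → ℝ≥0∞) :
    ∀ᵐ x ∂(volume.restrict (Set.Ioi 0)).withDensity f, 0 < x :=
  (withDensity_absolutelyContinuous _ _).ae_le (ae_restrict_mem measurableSet_Ioi)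

lemma integrable_withDensity_restrict_Ioi {d g : ℝ → ℝ} (hd : Measurable d)
    (hd0 : ∀ x ∈ Set.Ioi (0 : ℝ), 0 ≤ d x) (h : IntegrableOn (fun x => g x * d x) (Set.Ioi 0)) :
    Integrable g ((volume.restrict (Set.Ioi 0)).withDensity fun x => ENNReal.ofReal (d x)) := by
  rw [integrable_withDensity_iff hd.ennreal_ofReal (ae_of_all _ fun x => ENNReal.ofReal_lt_top)]
  refine h.congr ?_
  filter_upwards [ae_restrict_mem measurableSet_Ioi] with x hx
  rw [ENNReal.toReal_ofReal (hd0 x hx)]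

lemma integrableOn_rpow_mul_exp_neg_mul_Ioi {s r : ℝ} (hs : -1 < s) (hr : 0 < r) :
    IntegrableOn (fun x : ℝ => x ^ s * exp (-r * x)) (Set.Ioi 0) := by
  simpa only [rpow_one] using integrableOn_rpow_mul_exp_neg_mul_rpow hs one_pos hr

lemma rho0_univ {σ τ : ℝ} (hσ0 : 0 ≤ σ) (hσ : σ < 1) : rho0 σ τ Set.univ = ∞ := by
  set d : ℝ → ℝ := fun w => w ^ (-1 - σ) * exp (-τ * w) / Gamma (1 - σ)
  have hΓ : 0 < Gamma (1 - σ) := Gamma_pos_of_pos (by linarith)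
  rw [rho0, withDensity_apply _ MeasurableSet.univ, Measure.restrict_univ]
  by_contra hfin
  have hd : IntegrableOn d (Set.Ioo 0 1) := by
    refine IntegrableOn.mono_set ((lintegral_ofReal_ne_top_iff_integrable (by fun_prop) ?_).1 hfin)
      Set.Ioo_subset_Ioi_self
    filter_upwards [ae_restrict_mem measurableSet_Ioi] with x (hx : 0 < x)
    positivity
  -- on `(0, 1)` the density dominates `x ^ (-1 - σ)` up to a constant, as `exp (-τ x) ≥ exp (-|τ|)`
  have hpow : IntegrableOn (fun x : ℝ => x ^ (-1 - σ)) (Set.Ioo 0 1) := by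
    refine (hd.const_mul (Gamma (1 - σ) * exp |τ|)).mono' (by fun_prop) ?_
    filter_upwards [ae_restrict_mem measurableSet_Ioo] with x ⟨hx0, hx1⟩
    have hexp : 1 ≤ exp |τ| * exp (-τ * x) := by
      rw [← exp_add, one_le_exp_iff]
      nlinarith [neg_abs_le τ, le_abs_self τ]
    rw [norm_of_nonneg (by positivity)]
    calc x ^ (-1 - σ) ≤ x ^ (-1 - σ) * (exp |τ| * exp (-τ * x)) :=
          le_mul_of_one_le_right (by positivity) hexp
      _ = Gamma (1 - σ) * exp |τ| * d x := by
          simp only [d]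
          field_simp
  linarith [(intervalIntegral.integrableOn_Ioo_rpow_iff one_pos).1 hpow]

lemma integrable_id_rho0 {σ τ : ℝ} (hσ : σ < 1) (hτ : 0 < τ) :
    Integrable (fun x => x) (rho0 σ τ) := by
  refine integrable_withDensity_restrict_Ioi (by fun_prop) (fun x (hx : 0 < x) => by positivity) ?_
  refine IntegrableOn.congr_fun ((integrableOn_rpow_mul_exp_neg_mul_Ioi (s := -σ) (by linarith)
    hτ).const_mul (Gamma (1 - σ))⁻¹) (fun x (hx : 0 < x) => ?_) measurableSet_Ioi
  rw [show -σ = (-1 - σ) + 1 by ring, rpow_add_one hx.ne']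
  ring

open ProbabilityTheory in
lemma gammaM_univ {a b : ℝ} (ha : 0 < a) (hb : 0 < b) : gammaM a b Set.univ = 1 := by
  have hIoi : ∫⁻ x in Set.Ioi 0, gammaPDF a b x = ∫⁻ x, gammaPDF a b x := by
    rw [setLIntegral_congr Ioi_ae_eq_Ici]
    refine setLIntegral_eq_of_support_subset fun x hx => ?_
    by_contra hneg
    exact hx (gammaPDF_of_neg (not_le.1 hneg))
  rw [gammaM, withDensity_apply _ MeasurableSet.univ, Measure.restrict_univ,
    ← lintegral_gammaPDF_eq_one ha hb, ← hIoi]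
  refine setLIntegral_congr_fun measurableSet_Ioi fun x (hx : 0 < x) => ?_
  rw [gammaPDF_of_nonneg hx.le]
  ring_nf

lemma isProbabilityMeasure_gammaM {a b : ℝ} (ha : 0 < a) (hb : 0 < b) :
    IsProbabilityMeasure (gammaM a b) :=
  ⟨gammaM_univ ha hb⟩

lemma integrable_id_gammaM {a b : ℝ} (ha : 0 < a) (hb : 0 < b) :
    Integrable (fun x => x) (gammaM a b) := by
  refine integrable_withDensity_restrict_Ioi (by fun_prop) (fun x (hx : 0 < x) => by positivity) ?_
  refine IntegrableOn.congr_fun ((integrableOn_rpow_mul_exp_neg_mul_Ioi (s := a) (by linarith)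
    hb).const_mul (b ^ a / Gamma a)) (fun x (hx : 0 < x) => ?_) measurableSet_Ioi
  rw [show a = (a - 1) + 1 by ring, rpow_add_one hx.ne']
  ring_nf

section CompoundMeasure

variable {σ τ : ℝ} {p : ℕ} {a b : Fin p → ℝ}

lemma measurable_fst_mul_snd_apply (p : ℕ) :
    Measurable fun x : ℝ × (Fin p → ℝ) => fun k => x.1 * x.2 k := by
  fun_prop

instance : SFinite (rho0 σ τ) := by
  unfold rho0; infer_instance

instance {a b : ℝ} : SigmaFinite (gammaM a b) := by
  unfold gammaM; infer_instance

instance : SFinite (rhoC σ τ p a b) := by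
  unfold rhoC; infer_instance

lemma ae_pos_rhoC : ∀ᵐ v ∂rhoC σ τ p a b, ∀ k, 0 < v k := by
  have hmeas : MeasurableSet {v : Fin p → ℝ | ∀ k, 0 < v k} := by
    rw [Set.ofPred_forall]
    exact MeasurableSet.iInter fun k => measurable_pi_apply k measurableSet_Ioi
  rw [rhoC, ae_map_iff (measurable_fst_mul_snd_apply p).aemeasurable hmeas]
  have hfst : ∀ᵐ x ∂(rho0 σ τ).prod (Measure.pi fun k => gammaM (a k) (b k)), 0 < x.1 :=
    Measure.quasiMeasurePreserving_fst.ae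
      (ae_pos_withDensity_restrict_Ioi _ : ∀ᵐ x ∂rho0 σ τ, 0 < x)
  have hsnd : ∀ᵐ x ∂(rho0 σ τ).prod (Measure.pi fun k => gammaM (a k) (b k)), ∀ k, 0 < x.2 k :=
    Measure.quasiMeasurePreserving_snd.ae <| ae_all_iff.2 fun k =>
      (Measure.tendsto_eval_ae_ae (μ := fun k => gammaM (a k) (b k))).eventually
        (ae_pos_withDensity_restrict_Ioi _ : ∀ᵐ x ∂gammaM (a k) (b k), 0 < x)
  filter_upwards [hfst, hsnd] with x h1 h2 k using mul_pos h1 (h2 k)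

lemma rhoC_univ (hσ0 : 0 ≤ σ) (hσ : σ < 1) (ha : ∀ k, 0 < a k) (hb : ∀ k, 0 < b k) :
    rhoC σ τ p a b Set.univ = ∞ := by
  have := fun k => isProbabilityMeasure_gammaM (ha k) (hb k)
  rw [rhoC, Measure.map_apply (measurable_fst_mul_snd_apply p) MeasurableSet.univ,
    Set.preimage_univ, ← Set.univ_prod_univ, Measure.prod_prod, rho0_univ hσ0 hσ, measure_univ,
    mul_one]

lemma integrable_eval_rhoC (hσ : σ < 1) (hτ : 0 < τ) (ha : ∀ k, 0 < a k) (hb : ∀ k, 0 < b k)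
    (k : Fin p) : Integrable (fun v => v k) (rhoC σ τ p a b) := by
  have := fun k => isProbabilityMeasure_gammaM (ha k) (hb k)
  rw [rhoC, integrable_map_measure (measurable_pi_apply k).aestronglyMeasurable
    (measurable_fst_mul_snd_apply p).aemeasurable]
  exact (integrable_id_rho0 hσ hτ).mul_prod
    ((measurePreserving_eval (fun k => gammaM (a k) (b k)) k).integrable_comp_of_integrable
      (integrable_id_gammaM (ha k) (hb k)))

lemma integrable_sum_mul_rhoC (hσ : σ < 1) (hτ : 0 < τ) (ha : ∀ k, 0 < a k)
    (hb : ∀ k, 0 < b k) (t : Fin p → ℝ) :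
    Integrable (fun v => ∑ k, t k * v k) (rhoC σ τ p a b) :=
  integrable_finsetSum _ fun k _ => (integrable_eval_rhoC hσ hτ ha hb k).const_mul (t k)

lemma measurable_psi : Measurable (psi σ τ p a b) := by
  have hF : StronglyMeasurable fun q : (Fin p → ℝ) × (Fin p → ℝ) =>
      1 - exp (-∑ k, q.1 k * q.2 k) :=
    (by fun_prop : Continuous _).stronglyMeasurable
  exact hF.integral_prod_right'.measurable

lemma psi_le (hσ : σ < 1) (hτ : 0 < τ) (ha : ∀ k, 0 < a k) (hb : ∀ k, 0 < b k)
    {t : Fin p → ℝ} (ht : ∀ k, 0 ≤ t k) :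
    psi σ τ p a b t ≤ ∑ k, t k * ∫ v, v k ∂rhoC σ τ p a b := by
  have hnonneg : ∀ᵐ v ∂rhoC σ τ p a b, 0 ≤ ∑ k, t k * v k := by
    filter_upwards [ae_pos_rhoC] with v hv
    exact Finset.sum_nonneg fun k _ => mul_nonneg (ht k) (hv k).le
  refine (integral_one_sub_exp_neg_le (integrable_sum_mul_rhoC hσ hτ ha hb t) hnonneg).trans_eq ?_
  rw [integral_finsetSum _ fun k _ => (integrable_eval_rhoC hσ hτ ha hb k).const_mul (t k)]
  simp_rw [integral_const_mul]

lemma psi_pos [Nonempty (Fin p)] (hσ0 : 0 ≤ σ) (hσ : σ < 1) (hτ : 0 < τ) (ha : ∀ k, 0 < a k)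
    (hb : ∀ k, 0 < b k) {t : Fin p → ℝ} (ht : ∀ k, 0 < t k) : 0 < psi σ τ p a b t := by
  have hρ : rhoC σ τ p a b ≠ 0 :=
    Measure.measure_univ_ne_zero.1 (by simp [rhoC_univ hσ0 hσ ha hb])
  refine integral_one_sub_exp_neg_pos hρ (integrable_sum_mul_rhoC hσ hτ ha hb t) ?_
  filter_upwards [ae_pos_rhoC] with v hv
  exact Finset.sum_pos (fun k _ => mul_pos (ht k) (hv k)) Finset.univ_nonempty

end CompoundMeasure

/-- For `0 ≤ σ < 1` and fixed `T > 0`,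
`∫ (1 − e^{−α ψ(2Tw)}) ρ(dw) → ∞` as `α → ∞`; consequently
`E[V_{α,T}] = α ∫ (1 − e^{−α ψ(2Tw)}) ρ(dw) = ω(α)`, i.e. `α / E[V_{α,T}] → 0`. -/
theorem nodes_sparse_regime (σ τ : ℝ) (hσ0 : 0 ≤ σ) (hσ : σ < 1) (hτ : 0 < τ) (p : ℕ)
    (hp : 1 ≤ p) (a b : Fin p → ℝ) (ha : ∀ k, 0 < a k) (hb : ∀ k, 0 < b k)
    (T : ℝ) (hT : 0 < T) :
    Tendsto (fun α : ℝ => nodesIntegral σ τ p a b α T) atTop atTop ∧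
    Tendsto (fun α : ℝ => α / (α * nodesIntegral σ τ p a b α T)) atTop (nhds 0) := by
  have : Nonempty (Fin p) := ⟨⟨0, hp⟩⟩
  set Ψ : (Fin p → ℝ) → ℝ := fun w => psi σ τ p a b fun k => 2 * T * w k
  have hΨ_pos : ∀ᵐ w ∂rhoC σ τ p a b, 0 < Ψ w := by
    filter_upwards [ae_pos_rhoC] with w hw
    exact psi_pos hσ0 hσ hτ ha hb fun k => by have := hw k; positivity
  have hΨ_int : Integrable Ψ (rhoC σ τ p a b) := by
    refine (integrable_sum_mul_rhoC hσ hτ ha hb fun k => 2 * T * ∫ v, v k ∂rhoC σ τ p a b).mono'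
      (measurable_psi.comp (by fun_prop)).aestronglyMeasurable ?_
    filter_upwards [ae_pos_rhoC, hΨ_pos] with w hw hΨw
    rw [norm_of_nonneg hΨw.le]
    refine (psi_le hσ hτ ha hb fun k => ?_).trans_eq (Finset.sum_congr rfl fun k _ => by ring)
    have := hw k
    positivity
  have hI : Tendsto (fun α : ℝ => nodesIntegral σ τ p a b α T) atTop atTop :=
    tendsto_integral_one_sub_exp_neg_mul_atTop (rhoC_univ hσ0 hσ ha hb) hΨ_int hΨ_pos
  refine ⟨hI, hI.inv_tendsto_atTop.congr' ?_⟩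
  filter_upwards [eventually_gt_atTop 0] with α hα
  exact (div_mul_cancel_left₀ hα.ne' _).symm
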